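/- arXiv:2401.10490 — 2 statements merged into one kernel-verified Lean document; each statement's English description precedes it below -/
import Mathlib

section
/- Let (Ω, 𝔽, P) be a probability space, c > 0, and let N ≥ 1 and n ≥ 1 be integers. For each j ∈ {1, ..., N} and i ∈ {1, ..., n}, let h_{j,i} be a real-valued random variable with E[h_{j,i}] = 0 and |h_{j,i}| ≤ c almost surely, and suppose that for each fixed j the random variables h_{j,1}, ..., h_{j,n} are mutually independent. Then E[ max_{1 ≤ j ≤ N} ( (1/n)·∑_{i=1}^n h_{j,i} − (1/(4c))·(1/n)·∑_{i=1}^n E[h_{j,i}²] ) ] ≤ (3c·log N)/n. -/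
open MeasureTheory ProbabilityTheory
open scoped BigOperators

/-!
For `|x| ≤ 1/3` one has `exp x ≤ 1 + x + (3/4) x²`, so a centered random variable bounded by `c`
satisfies `E[exp (t X)] ≤ exp ((3/4) t² E[X²])` whenever `|t| c ≤ 1/3`. By independence, the
row sums then satisfy `E[exp (t (∑ᵢ Xᵢ - (3/4) t ∑ᵢ E[Xᵢ²]))] ≤ 1`. Jensen's inequality and
`exp (t · max_j G_j) ≤ ∑_j exp (t G_j)` turn this into `t · E[max_j G_j] ≤ log N`, and
`t = 1/(3c)` makes the penalty `(3/4) t` equal to `1/(4c)`.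
-/

theorem Real.exp_le_one_add_add_mul_sq_of_abs_le {x : ℝ} (hx : |x| ≤ 1 / 3) :
    Real.exp x ≤ 1 + x + 3 / 4 * x ^ 2 := by
  have hTaylor := (abs_le.mp (Real.exp_bound (hx.trans (by norm_num)) (n := 3) (by norm_num))).2
  have hcube : |x| ^ 3 ≤ 1 / 3 * x ^ 2 := by
    rw [pow_succ, sq_abs, mul_comm]
    exact mul_le_mul_of_nonneg_right hx (sq_nonneg x)
  norm_num [Finset.sum_range_succ, Nat.factorial] at hTaylor
  nlinarith

namespace ProbabilityTheory

variable {Ω : Type*} [MeasurableSpace Ω] {μ : Measure Ω} [IsProbabilityMeasure μ]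

theorem mgf_le_exp_integral_sq_of_abs_le {X : Ω → ℝ} {c t : ℝ} (hX : AEMeasurable X μ)
    (hmean : ∫ ω, X ω ∂μ = 0) (hbdd : ∀ᵐ ω ∂μ, |X ω| ≤ c) (ht : |t| * c ≤ 1 / 3) :
    mgf X μ t ≤ Real.exp (3 / 4 * t ^ 2 * ∫ ω, X ω ^ 2 ∂μ) := by
  have hIcc : ∀ᵐ ω ∂μ, X ω ∈ Set.Icc (-c) c := hbdd.mono fun _ h => abs_le.mp h
  have hint : Integrable X μ := .of_mem_Icc (-c) c hX hIcc
  have hint_sq : Integrable (fun ω => X ω ^ 2) μ :=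
    .of_mem_Icc 0 (c ^ 2) (hX.pow_const 2) <| hbdd.mono fun ω h =>
      ⟨sq_nonneg _, by rw [← sq_abs]; exact pow_le_pow_left₀ (abs_nonneg _) h 2⟩
  have hquad : ∀ᵐ ω ∂μ, Real.exp (t * X ω) ≤ 1 + t * X ω + 3 / 4 * t ^ 2 * X ω ^ 2 :=
    hbdd.mono fun ω h => by
      have := Real.exp_le_one_add_add_mul_sq_of_abs_le (x := t * X ω) <| by
        rw [abs_mul]
        exact (mul_le_mul_of_nonneg_left h (abs_nonneg t)).trans ht
      linarith
  have hint_lin : Integrable (fun ω => 1 + t * X ω) μ := (integrable_const 1).add (hint.const_mul t)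
  calc mgf X μ t ≤ ∫ ω, (1 + t * X ω + 3 / 4 * t ^ 2 * X ω ^ 2) ∂μ :=
        integral_mono_ae (integrable_exp_mul_of_mem_Icc hX hIcc)
          (hint_lin.add (hint_sq.const_mul _)) hquad
    _ = 1 + 3 / 4 * t ^ 2 * ∫ ω, X ω ^ 2 ∂μ := by
        rw [integral_add hint_lin (hint_sq.const_mul _),
          integral_add (integrable_const 1) (hint.const_mul t), integral_const_mul,
          integral_const_mul, hmean]
        simp
    _ ≤ Real.exp (3 / 4 * t ^ 2 * ∫ ω, X ω ^ 2 ∂μ) := by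
        linarith [Real.add_one_le_exp (3 / 4 * t ^ 2 * ∫ ω, X ω ^ 2 ∂μ)]

theorem iIndepFun.mgf_sum_le_exp_sum_integral_sq {ι : Type*} {X : ι → Ω → ℝ} {c t : ℝ}
    (hindep : iIndepFun X μ) (hX : ∀ i, Measurable (X i)) (hmean : ∀ i, ∫ ω, X i ω ∂μ = 0)
    (hbdd : ∀ i, ∀ᵐ ω ∂μ, |X i ω| ≤ c) (ht : |t| * c ≤ 1 / 3) (s : Finset ι) :
    mgf (∑ i ∈ s, X i) μ t ≤ Real.exp (3 / 4 * t ^ 2 * ∑ i ∈ s, ∫ ω, X i ω ^ 2 ∂μ) := by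
  rw [hindep.mgf_sum hX, Finset.mul_sum, Real.exp_sum]
  exact Finset.prod_le_prod (fun i _ => mgf_nonneg) fun i _ =>
    mgf_le_exp_integral_sq_of_abs_le (hX i).aemeasurable (hmean i) (hbdd i) ht

theorem iIndepFun.integral_exp_mul_sum_sub_le_one {ι : Type*} {X : ι → Ω → ℝ} {c t : ℝ}
    (hindep : iIndepFun X μ) (hX : ∀ i, Measurable (X i)) (hmean : ∀ i, ∫ ω, X i ω ∂μ = 0)
    (hbdd : ∀ i, ∀ᵐ ω ∂μ, |X i ω| ≤ c) (ht : |t| * c ≤ 1 / 3) (s : Finset ι) :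
    ∫ ω, Real.exp (t * (∑ i ∈ s, X i ω - 3 / 4 * t * ∑ i ∈ s, ∫ ω', X i ω' ^ 2 ∂μ)) ∂μ ≤ 1 := by
  set V := ∑ i ∈ s, ∫ ω', X i ω' ^ 2 ∂μ
  have hsplit : ∀ ω, Real.exp (t * (∑ i ∈ s, X i ω - 3 / 4 * t * V)) =
      Real.exp (-(3 / 4 * t ^ 2 * V)) * Real.exp (t * (∑ i ∈ s, X i) ω) := fun ω => by
    rw [← Real.exp_add, Finset.sum_apply]
    ring_nf
  simp_rw [hsplit]
  rw [integral_const_mul, ← mgf]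
  calc Real.exp (-(3 / 4 * t ^ 2 * V)) * mgf (∑ i ∈ s, X i) μ t
      ≤ Real.exp (-(3 / 4 * t ^ 2 * V)) * Real.exp (3 / 4 * t ^ 2 * V) :=
        mul_le_mul_of_nonneg_left (hindep.mgf_sum_le_exp_sum_integral_sq hX hmean hbdd ht s)
          (Real.exp_pos _).le
    _ = 1 := by rw [← Real.exp_add, neg_add_cancel, Real.exp_zero]

theorem mul_integral_iSup_le_log_sum_integral_exp {ι : Type*} [Fintype ι] [Nonempty ι]
    {G : ι → Ω → ℝ} {t : ℝ} (hG : ∀ j, Measurable (G j))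
    (hint : ∀ j, Integrable (G j) μ)
    (hint_exp : ∀ j, Integrable (fun ω => Real.exp (t * G j ω)) μ) :
    t * ∫ ω, ⨆ j, G j ω ∂μ ≤ Real.log (∑ j, ∫ ω, Real.exp (t * G j ω) ∂μ) := by
  set F : Ω → ℝ := fun ω => ⨆ j, G j ω
  have hF_meas : Measurable F := .iSup hG
  have hF_attained : ∀ ω, ∃ j, F ω = G j ω := fun ω =>
    (exists_eq_ciSup_of_finite (f := fun j => G j ω)).imp fun _ h => h.symm
  have hF_int : Integrable F μ := by
    refine .mono' (integrable_finsetSum Finset.univ fun j _ => (hint j).abs)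
      hF_meas.aestronglyMeasurable (ae_of_all _ fun ω => ?_)
    obtain ⟨j, hj⟩ := hF_attained ω
    rw [hj, Real.norm_eq_abs]
    exact Finset.single_le_sum (f := fun j => |G j ω|) (fun _ _ => abs_nonneg _) (Finset.mem_univ j)
  have hexp_le_sum : ∀ ω, Real.exp (t * F ω) ≤ ∑ j, Real.exp (t * G j ω) := fun ω => by
    obtain ⟨j, hj⟩ := hF_attained ω
    rw [hj]
    exact Finset.single_le_sum (f := fun j => Real.exp (t * G j ω)) (fun _ _ => (Real.exp_pos _).le)
      (Finset.mem_univ j)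
  have hint_sum : Integrable (fun ω => ∑ j, Real.exp (t * G j ω)) μ :=
    integrable_finsetSum Finset.univ fun j _ => hint_exp j
  have hexp_int : Integrable (fun ω => Real.exp (t * F ω)) μ :=
    .mono' hint_sum (hF_meas.const_mul t).exp.aestronglyMeasurable <|
      ae_of_all _ fun ω => by rw [Real.norm_of_nonneg (Real.exp_pos _).le]; exact hexp_le_sum ω
  have hjensen : Real.exp (∫ ω, t * F ω ∂μ) ≤ ∫ ω, Real.exp (t * F ω) ∂μ :=
    convexOn_exp.map_integral_le Real.continuous_exp.continuousOn isClosed_univ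
      (ae_of_all _ fun _ => Set.mem_univ _) (hF_int.const_mul t) hexp_int
  rw [Real.le_log_iff_exp_le (Finset.sum_pos (fun j _ => integral_exp_pos (hint_exp j))
    Finset.univ_nonempty), ← integral_const_mul]
  calc Real.exp (∫ ω, t * F ω ∂μ) ≤ ∫ ω, Real.exp (t * F ω) ∂μ := hjensen
    _ ≤ ∫ ω, ∑ j, Real.exp (t * G j ω) ∂μ := integral_mono hexp_int hint_sum hexp_le_sum
    _ = ∑ j, ∫ ω, Real.exp (t * G j ω) ∂μ := integral_finsetSum _ fun j _ => hint_exp j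

theorem mul_integral_iSup_sum_sub_le_log_card {κ ι : Type*} [Fintype κ] [Nonempty κ]
    [Fintype ι] {X : κ → ι → Ω → ℝ} {c t : ℝ} (hindep : ∀ j, iIndepFun (X j) μ)
    (hX : ∀ j i, Measurable (X j i)) (hmean : ∀ j i, ∫ ω, X j i ω ∂μ = 0)
    (hbdd : ∀ j i, ∀ᵐ ω ∂μ, |X j i ω| ≤ c) (ht : |t| * c ≤ 1 / 3) :
    t * ∫ ω, ⨆ j, (∑ i, X j i ω - 3 / 4 * t * ∑ i, ∫ ω', X j i ω' ^ 2 ∂μ) ∂μ ≤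
      Real.log (Fintype.card κ) := by
  set K : κ → ℝ := fun j => 3 / 4 * t * ∑ i, ∫ ω', X j i ω' ^ 2 ∂μ
  set G : κ → Ω → ℝ := fun j ω => ∑ i, X j i ω - K j
  have hIcc : ∀ j i, ∀ᵐ ω ∂μ, X j i ω ∈ Set.Icc (-c) c := fun j i =>
    (hbdd j i).mono fun _ => abs_le.mp
  have hG_int : ∀ j, Integrable (G j) μ := fun j =>
    (integrable_finsetSum _ fun i _ => .of_mem_Icc (-c) c (hX j i).aemeasurable (hIcc j i)).sub
      (integrable_const _)
  have hG_exp_int : ∀ j, Integrable (fun ω => Real.exp (t * G j ω)) μ := fun j => by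
    refine (((hindep j).integrable_exp_mul_sum (t := t) (hX j) (s := Finset.univ) fun i _ =>
      integrable_exp_mul_of_mem_Icc (hX j i).aemeasurable (hIcc j i)).const_mul
        (Real.exp (-(t * K j)))).congr (ae_of_all _ fun ω => ?_)
    simp only [G, ← Real.exp_add, Finset.sum_apply]
    ring_nf
  refine (mul_integral_iSup_le_log_sum_integral_exp
    (fun j => (Finset.measurable_sum _ fun i _ => hX j i).sub_const _) hG_int hG_exp_int).trans
    (Real.log_le_log (Finset.sum_pos (fun j _ => integral_exp_pos (hG_exp_int j))
      Finset.univ_nonempty) ?_)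
  calc ∑ j, ∫ ω, Real.exp (t * G j ω) ∂μ ≤ ∑ _j : κ, (1 : ℝ) := Finset.sum_le_sum fun j _ =>
        (hindep j).integral_exp_mul_sum_sub_le_one (hX j) (hmean j) (hbdd j) ht _
    _ = Fintype.card κ := by simp

end ProbabilityTheory

theorem stmt_12_general {Ω : Type*} [MeasurableSpace Ω] (μ : Measure Ω) [IsProbabilityMeasure μ]
    (c : ℝ) (hc : 0 < c) (N n : ℕ) (hN : 1 ≤ N)
    (h : Fin N → Fin n → Ω → ℝ)
    (hmeas : ∀ j i, Measurable (h j i))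
    (hmean : ∀ j i, ∫ ω, h j i ω ∂μ = 0)
    (hbdd : ∀ j i, ∀ᵐ ω ∂μ, |h j i ω| ≤ c)
    (hindep : ∀ j, iIndepFun (fun i => h j i) μ) :
    ∫ ω, (⨆ j : Fin N,
        ((1 / (n : ℝ)) * ∑ i, h j i ω -
          (1 / (4 * c)) * ((1 / (n : ℝ)) * ∑ i, ∫ ω', (h j i ω') ^ 2 ∂μ))) ∂μ ≤
      3 * c * Real.log N / n := by
  have : Nonempty (Fin N) := Fin.pos_iff_nonempty.mp hN
  set t : ℝ := 1 / (3 * c)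
  set F : Ω → ℝ := fun ω => ⨆ j, (∑ i, h j i ω - 3 / 4 * t * ∑ i, ∫ ω', h j i ω' ^ 2 ∂μ)
  have ht : |t| * c ≤ 1 / 3 := le_of_eq <| by
    rw [abs_of_pos (by positivity)]; simp only [t]; field_simp
  have hF : ∫ ω, F ω ∂μ ≤ 3 * c * Real.log N := by
    have := mul_integral_iSup_sum_sub_le_log_card hindep hmeas hmean hbdd ht
    rw [Fintype.card_fin] at this
    calc ∫ ω, F ω ∂μ = 3 * c * (t * ∫ ω, F ω ∂μ) := by simp only [t]; field_simp
      _ ≤ 3 * c * Real.log N := by gcongr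
  have hintegrand : ∀ ω, (⨆ j : Fin N,
      ((1 / (n : ℝ)) * ∑ i, h j i ω -
        (1 / (4 * c)) * ((1 / (n : ℝ)) * ∑ i, ∫ ω', (h j i ω') ^ 2 ∂μ))) = 1 / (n : ℝ) * F ω :=
    fun ω => by
      rw [Real.mul_iSup_of_nonneg (by positivity)]
      congr 1 with j
      simp only [t]
      field_simp
  simp_rw [hintegrand]
  rw [integral_const_mul]
  calc 1 / (n : ℝ) * ∫ ω, F ω ∂μ ≤ 1 / (n : ℝ) * (3 * c * Real.log N) := by gcongr
    _ = 3 * c * Real.log N / n := by ring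

/-- Variance-penalized maximal inequality from the proof of Lemma B.6: for a finite
family of rows of centered, bounded, independent random variables,
`E[max_j ((1/n)∑ᵢ h_{j,i} − (1/(4c))·(1/n)∑ᵢ E[h_{j,i}²])] ≤ 3c·log N / n`. -/
theorem stmt_12 {Ω : Type*} [MeasurableSpace Ω] (μ : Measure Ω) [IsProbabilityMeasure μ]
    (c : ℝ) (hc : 0 < c) (N n : ℕ) (hN : 1 ≤ N) (hn : 1 ≤ n)
    (h : Fin N → Fin n → Ω → ℝ)
    (hmeas : ∀ j i, Measurable (h j i))
    (hmean : ∀ j i, ∫ ω, h j i ω ∂μ = 0)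
    (hbdd : ∀ j i, ∀ᵐ ω ∂μ, |h j i ω| ≤ c)
    (hindep : ∀ j, iIndepFun (fun i => h j i) μ) :
    ∫ ω, (⨆ j : Fin N,
        ((1 / (n : ℝ)) * ∑ i, h j i ω -
          (1 / (4 * c)) * ((1 / (n : ℝ)) * ∑ i, ∫ ω', (h j i ω') ^ 2 ∂μ))) ∂μ ≤
      3 * c * Real.log N / n :=
  stmt_12_general μ c hc N n hN h hmeas hmean hbdd hindep
end

section
/- Let (Ω, 𝔽, μ) be a probability space, B > 0, let N ≥ 1 and n ≥ 1 be integers, let g₁, ..., g_N : Ω → ℝ be measurable functions with 0 ≤ g_j(ω) ≤ B for all ω ∈ Ω and all j, and let u₁, ..., u_n be i.i.d. Ω-valued random variables with common distribution μ. Then E[ max_{1 ≤ j ≤ N} ( E_{u∼μ}[g_j(u)] − (2/n)·∑_{i=1}^n g_j(u_i) ) ] ≤ (12·B·log N)/n. -/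
/-! With `t = n / (2B)`, each deviation `E g − (2/n) ∑ᵢ g(uᵢ)` has moment generating function at
most `1` at `t`: for one sample this is the self-bounding estimate `E exp(-g/B) ≤ 1 - E g/(2B)`,
coming from the chord of `exp` on `[-1, 0]` and `exp (-1) < 1/2`, and the i.i.d. sample tensorizes
it. Jensen's inequality and the union bound `exp (t · max) ≤ ∑ exp (t · Zⱼ)` then give
`t · E max ≤ log N`, i.e. the bound with constant `2` in place of `12`. -/

open MeasureTheory ProbabilityTheory Real Set

lemma Real.exp_neg_le_one_sub_div_two {x : ℝ} (h0 : 0 ≤ x) (h1 : x ≤ 1) :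
    exp (-x) ≤ 1 - x / 2 := by
  have hchord := convexOn_exp.2 (mem_univ 0) (mem_univ (-1)) (sub_nonneg.2 h1) h0 (by ring)
  simp only [smul_eq_mul, mul_zero, zero_add, mul_neg_one, exp_zero, mul_one] at hchord
  nlinarith [exp_neg_one_lt_half]

lemma exp_mul_ciSup_le_sum {ι : Type*} [Fintype ι] [Nonempty ι] (t : ℝ) (x : ι → ℝ) :
    exp (t * ⨆ j, x j) ≤ ∑ j, exp (t * x j) := by
  obtain ⟨j, hj⟩ := exists_eq_ciSup_of_finite (f := x)
  rw [← hj]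
  exact Finset.single_le_sum (f := fun j => exp (t * x j)) (fun _ _ => (exp_pos _).le)
    (Finset.mem_univ j)

namespace ProbabilityTheory

variable {Ω : Type*} [MeasurableSpace Ω] {μ : Measure Ω} [IsProbabilityMeasure μ]

lemma mgf_neg_inv_le_exp_neg_integral_div {B : ℝ} (hB : 0 < B) {f : Ω → ℝ}
    (hf : Measurable f) (hbdd : ∀ x, f x ∈ Icc 0 B) :
    mgf f μ (-B⁻¹) ≤ exp (-(∫ x, f x ∂μ) / (2 * B)) := by
  have hfi : Integrable f μ := .of_mem_Icc 0 B hf.aemeasurable (ae_of_all _ hbdd)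
  have hpt : ∀ x, exp (-B⁻¹ * f x) ≤ 1 - f x / B / 2 := fun x => by
    rw [neg_mul, inv_mul_eq_div]
    exact exp_neg_le_one_sub_div_two (div_nonneg (hbdd x).1 hB.le)
      ((div_le_one hB).2 (hbdd x).2)
  calc mgf f μ (-B⁻¹) ≤ ∫ x, (1 - f x / B / 2) ∂μ :=
        integral_mono (integrable_exp_mul_of_mem_Icc hf.aemeasurable (ae_of_all _ hbdd))
          ((integrable_const 1).sub ((hfi.div_const B).div_const 2)) hpt
    _ = 1 + (-(∫ x, f x ∂μ) / (2 * B)) := by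
        rw [integral_sub (integrable_const 1) ((hfi.div_const B).div_const 2), integral_div,
          integral_div, integral_const, probReal_univ, one_smul]
        ring
    _ ≤ exp (-(∫ x, f x ∂μ) / (2 * B)) := by
        linarith [add_one_le_exp (-(∫ x, f x ∂μ) / (2 * B))]

lemma mgf_sum_comp_eval_pi {ι : Type*} [Fintype ι] (f : Ω → ℝ) (t : ℝ) :
    mgf (fun u : ι → Ω => ∑ i, f (u i)) (Measure.pi fun _ => μ) t =
      mgf f μ t ^ Fintype.card ι := by
  simp only [mgf, Finset.mul_sum, exp_sum]
  exact integral_fintype_prod_eq_pow (fun x => exp (t * f x))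

section MaximalInequality

variable {α ι : Type*} [MeasurableSpace α] {ν : Measure α} [Fintype ι] [Nonempty ι]
  {Z : ι → α → ℝ}

lemma integrable_ciSup (hint : ∀ j, Integrable (Z j) ν) : Integrable (fun a => ⨆ j, Z j a) ν := by
  refine (integrable_finsetSum Finset.univ fun j _ => (hint j).abs).mono'
    (AEMeasurable.iSup fun j => (hint j).aemeasurable).aestronglyMeasurable
    (ae_of_all _ fun a => ?_)
  obtain ⟨j, hj⟩ := exists_eq_ciSup_of_finite (f := fun j => Z j a)
  rw [← hj, norm_eq_abs]
  exact Finset.single_le_sum (f := fun j => |Z j a|) (fun _ _ => abs_nonneg _) (Finset.mem_univ j)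

theorem integral_ciSup_le_log_card_div [IsProbabilityMeasure ν] {t : ℝ} (ht : 0 < t)
    (hint : ∀ j, Integrable (Z j) ν) (hexp : ∀ j, Integrable (fun a => exp (t * Z j a)) ν)
    (hmgf : ∀ j, mgf (Z j) ν t ≤ 1) :
    ∫ a, ⨆ j, Z j a ∂ν ≤ log (Fintype.card ι) / t := by
  have hsum : Integrable (fun a => ∑ j, exp (t * Z j a)) ν :=
    integrable_finsetSum _ fun j _ => hexp j
  have hexp_sup : Integrable (fun a => exp (t * ⨆ j, Z j a)) ν :=
    hsum.mono' (aemeasurable_exp_mul t (AEMeasurable.iSup fun j => (hint j).aemeasurable))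
      (ae_of_all _ fun a => by
        rw [norm_of_nonneg (exp_pos _).le]; exact exp_mul_ciSup_le_sum t fun j => Z j a)
  have jensen : exp (t * ∫ a, ⨆ j, Z j a ∂ν) ≤ ∫ a, exp (t * ⨆ j, Z j a) ∂ν := by
    rw [← integral_const_mul]
    exact convexOn_exp.map_integral_le continuous_exp.continuousOn isClosed_univ
      (ae_of_all _ fun _ => mem_univ _) ((integrable_ciSup hint).const_mul t) hexp_sup
  have union_bound : ∫ a, exp (t * ⨆ j, Z j a) ∂ν ≤ Fintype.card ι :=
    calc ∫ a, exp (t * ⨆ j, Z j a) ∂ν ≤ ∫ a, ∑ j, exp (t * Z j a) ∂ν :=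
          integral_mono hexp_sup hsum fun a => exp_mul_ciSup_le_sum t fun j => Z j a
      _ = ∑ j, mgf (Z j) ν t := integral_finsetSum _ fun j _ => hexp j
      _ ≤ ∑ _j : ι, (1 : ℝ) := Finset.sum_le_sum fun j _ => hmgf j
      _ = Fintype.card ι := by simp
  rw [le_div_iff₀ ht, mul_comm, le_log_iff_exp_le (by exact_mod_cast Fintype.card_pos)]
  exact jensen.trans union_bound

end MaximalInequality

section EmpiricalDeviation

variable {B : ℝ} {f : Ω → ℝ} {n : ℕ}

lemma integral_sub_two_div_mul_sum_mem_Icc (hn : 0 < n) (hf : Measurable f)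
    (hbdd : ∀ x, f x ∈ Icc 0 B) (u : Fin n → Ω) :
    (∫ x, f x ∂μ) - (2 / (n : ℝ)) * ∑ i, f (u i) ∈ Icc (-(2 * B)) B := by
  have hmean : ∫ x, f x ∂μ ∈ Icc 0 B :=
    (convex_Icc 0 B).integral_mem isClosed_Icc (ae_of_all _ hbdd)
      (.of_mem_Icc 0 B hf.aemeasurable (ae_of_all _ hbdd))
  have hsum_nonneg : 0 ≤ (2 / (n : ℝ)) * ∑ i, f (u i) :=
    mul_nonneg (by positivity) (Finset.sum_nonneg fun i _ => (hbdd (u i)).1)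
  have hsum_le : (2 / (n : ℝ)) * ∑ i, f (u i) ≤ 2 * B :=
    calc (2 / (n : ℝ)) * ∑ i, f (u i) ≤ (2 / (n : ℝ)) * ∑ _i : Fin n, B := by
          gcongr with i; exact (hbdd (u i)).2
      _ = 2 * B := by simp only [Finset.sum_const, Finset.card_univ, Fintype.card_fin,
          nsmul_eq_mul]; field_simp
  constructor <;> linarith [hmean.1, hmean.2]

lemma mgf_integral_sub_two_div_mul_sum_le_one (hB : 0 < B) (hn : 0 < n) (hf : Measurable f)
    (hbdd : ∀ x, f x ∈ Icc 0 B) :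
    mgf (fun u : Fin n → Ω => (∫ x, f x ∂μ) - (2 / (n : ℝ)) * ∑ i, f (u i))
      (Measure.pi fun _ => μ) (n / (2 * B)) ≤ 1 := by
  set m := ∫ x, f x ∂μ
  have hsplit : (fun u : Fin n → Ω => m - (2 / (n : ℝ)) * ∑ i, f (u i)) =
      fun u => m + -(2 / (n : ℝ)) * ∑ i, f (u i) := by
    funext u; ring
  have hrate : -(2 / (n : ℝ)) * (n / (2 * B)) = -B⁻¹ := by field_simp
  rw [hsplit, mgf_const_add, mgf_const_mul, mgf_sum_comp_eval_pi, Fintype.card_fin, hrate]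
  calc exp (n / (2 * B) * m) * mgf f μ (-B⁻¹) ^ n
      ≤ exp (n / (2 * B) * m) * exp (-m / (2 * B)) ^ n := by
        gcongr
        · exact mgf_nonneg
        · exact mgf_neg_inv_le_exp_neg_integral_div hB hf hbdd
    _ = 1 := by
        rw [← exp_nat_mul, ← exp_add, exp_eq_one_iff]
        ring

end EmpiricalDeviation

theorem integral_ciSup_integral_sub_two_div_mul_sum_le {ι : Type*} [Fintype ι] [Nonempty ι]
    {B : ℝ} (hB : 0 < B) {n : ℕ} (hn : 0 < n) (g : ι → Ω → ℝ) (hmeas : ∀ j, Measurable (g j))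
    (hbdd : ∀ j x, g j x ∈ Icc 0 B) :
    ∫ u : Fin n → Ω, (⨆ j, ((∫ x, g j x ∂μ) - (2 / (n : ℝ)) * ∑ i, g j (u i)))
        ∂(Measure.pi fun _ => μ) ≤ 2 * B * log (Fintype.card ι) / n := by
  have hbddZ j := integral_sub_two_div_mul_sum_mem_Icc (μ := μ) hn (hmeas j) (hbdd j)
  have hmeasZ j : Measurable fun u : Fin n → Ω =>
      (∫ x, g j x ∂μ) - (2 / (n : ℝ)) * ∑ i, g j (u i) := by
    have := hmeas j
    fun_prop
  calc _ ≤ log (Fintype.card ι) / (n / (2 * B)) :=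
        integral_ciSup_le_log_card_div (by positivity)
          (fun j => .of_mem_Icc _ _ (hmeasZ j).aemeasurable (ae_of_all _ (hbddZ j)))
          (fun j => integrable_exp_mul_of_mem_Icc (hmeasZ j).aemeasurable (ae_of_all _ (hbddZ j)))
          (fun j => mgf_integral_sub_two_div_mul_sum_le_one hB hn (hmeas j) (hbdd j))
    _ = 2 * B * log (Fintype.card ι) / n := by field_simp

end ProbabilityTheory

/-- Finite-class uniform deviation bound at the core of Lemmas B.6 and 5.7: for a
finite class of `[0,B]`-valued functions and an i.i.d. sample `u₁,…,uₙ ∼ μ`,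
`E[max_j (E_{u∼μ}[g_j(u)] − (2/n)∑ᵢ g_j(uᵢ))] ≤ 12·B·log N / n`. -/
theorem stmt_13 {Ω : Type*} [MeasurableSpace Ω] (μ : Measure Ω) [IsProbabilityMeasure μ]
    (B : ℝ) (hB : 0 < B) (N n : ℕ) (hN : 1 ≤ N) (hn : 1 ≤ n)
    (g : Fin N → Ω → ℝ) (hmeas : ∀ j, Measurable (g j))
    (hbdd : ∀ j ω, g j ω ∈ Set.Icc (0 : ℝ) B) :
    ∫ u : Fin n → Ω,
        (⨆ j : Fin N, ((∫ x, g j x ∂μ) - (2 / (n : ℝ)) * ∑ i, g j (u i)))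
        ∂(Measure.pi fun _ : Fin n => μ) ≤
      12 * B * Real.log N / n := by
  have : Nonempty (Fin N) := ⟨⟨0, hN⟩⟩
  calc _ ≤ 2 * B * log (Fintype.card (Fin N)) / n :=
        integral_ciSup_integral_sub_two_div_mul_sum_le hB hn g hmeas hbdd
    _ ≤ 12 * B * log N / n := by
        rw [Fintype.card_fin]
        have : 0 ≤ log N := log_nonneg (by exact_mod_cast hN)
        gcongr
        norm_num
end
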